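/- Let q>1 be a real number. Then the zero set of the entire function exp_q is exactly { −q^{m+1}/(q−1) : m ∈ ℕ, m ≥ 0 }; that is, exp_q(z) = 0 if and only if z = −q^{m+1}/(q−1) for some integer m ≥ 0. -/

import Mathlib

set_option autoImplicit false

open Complex Real

/-- The q-factorial `[n]_q! = ∏_{j=1}^n (q^j - 1)/(q - 1)`. -/
noncomputable def qFactorial (q : ℝ) (n : ℕ) : ℝ :=
  ∏ j ∈ Finset.range n, ((q ^ (j + 1) - 1) / (q - 1))

/-- The q-exponential `exp_q(z) = ∑_{n ≥ 0} z^n / [n]_q!`. -/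
noncomputable def qExp (q : ℝ) (z : ℂ) : ℂ :=
  ∑' n : ℕ, z ^ n / (qFactorial q n : ℂ)

/-!
Since `(q - 1)[n]_q = q^n - 1`, the series satisfies the functional equation
`exp_q(q z) = (1 + (q - 1) z) exp_q(z)`, hence
`exp_q(q^n w) = ∏_{k<n} (1 + (q - 1) q^k w) · exp_q(w)`.
Taking `w = -1/(q - 1)` shows that every `-q^(m+1)/(q - 1)` is a zero. Conversely, if
`exp_q(z) = 0`, then `w = z/q^n` is so close to `0` for large `n` that `exp_q(w) ≠ 0` (as `exp_q`
is continuous with `exp_q(0) = 1`), so one of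
the factors `1 + (q - 1) q^k z/q^n` with `k < n` vanishes.
-/

open Filter Topology
open scoped Nat

variable {q : ℝ}

lemma qFactorial_succ (n : ℕ) :
    qFactorial q (n + 1) = qFactorial q n * ((q ^ (n + 1) - 1) / (q - 1)) :=
  Finset.prod_range_succ _ _

lemma natCast_le_qNumber (hq : 1 < q) (n : ℕ) : (n : ℝ) ≤ (q ^ n - 1) / (q - 1) := by
  rw [le_div_iff₀ (sub_pos.2 hq)]
  have := one_add_mul_le_pow (a := q - 1) (by linarith) n
  simp only [add_sub_cancel] at this
  linarith

lemma factorial_le_qFactorial (hq : 1 < q) (n : ℕ) : (n ! : ℝ) ≤ qFactorial q n := by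
  rw [← Finset.prod_range_add_one_eq_factorial, Nat.cast_prod, qFactorial]
  refine Finset.prod_le_prod (fun _ _ => by positivity) fun j _ => ?_
  exact_mod_cast natCast_le_qNumber hq (j + 1)

lemma qFactorial_pos (hq : 1 < q) (n : ℕ) : 0 < qFactorial q n :=
  (Nat.cast_pos.2 n.factorial_pos).trans_le (factorial_le_qFactorial hq n)

lemma norm_pow_div_qFactorial_le (hq : 1 < q) {z : ℂ} {R : ℝ} (hz : ‖z‖ ≤ R) (n : ℕ) :
    ‖z ^ n / (qFactorial q n : ℂ)‖ ≤ R ^ n / n ! := by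
  rw [norm_div, norm_pow, Complex.norm_real, Real.norm_of_nonneg (qFactorial_pos hq n).le]
  exact div_le_div₀ (pow_nonneg ((norm_nonneg z).trans hz) n)
    (pow_le_pow_left₀ (norm_nonneg z) hz n) (by positivity) (factorial_le_qFactorial hq n)

lemma summable_qExp (hq : 1 < q) (z : ℂ) :
    Summable fun n : ℕ => z ^ n / (qFactorial q n : ℂ) :=
  (Real.summable_pow_div_factorial ‖z‖).of_norm_bounded
    (norm_pow_div_qFactorial_le hq le_rfl)

lemma continuous_qExp (hq : 1 < q) : Continuous (qExp q) := by
  refine continuous_iff_continuousAt.2 fun z => ?_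
  have hon : ContinuousOn (qExp q) (Metric.closedBall 0 (‖z‖ + 1)) :=
    continuousOn_tsum (fun n => by fun_prop) (Real.summable_pow_div_factorial (‖z‖ + 1))
      fun n w hw => norm_pow_div_qFactorial_le hq (mem_closedBall_zero_iff.1 hw) n
  exact hon.continuousAt (Metric.closedBall_mem_nhds_of_mem (by simp))

@[simp]
lemma qExp_zero : qExp q 0 = 1 := by
  rw [qExp, tsum_eq_single 0 fun n hn => by simp [zero_pow hn]]
  simp [qFactorial]

lemma qExp_mul_self (hq : 1 < q) (z : ℂ) :
    qExp q (q * z) = (1 + (q - 1) * z) * qExp q z := by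
  have hq1 : (q : ℂ) - 1 ≠ 0 := sub_ne_zero.2 (by exact_mod_cast hq.ne')
  have hsum := (summable_qExp hq (q * z)).sub (summable_qExp hq z)
  have hterm (n : ℕ) :
      (q * z) ^ (n + 1) / (qFactorial q (n + 1) : ℂ) - z ^ (n + 1) / (qFactorial q (n + 1) : ℂ)
        = (q - 1) * z * (z ^ n / (qFactorial q n : ℂ)) := by
    have hqn : (q : ℂ) ^ (n + 1) - 1 ≠ 0 :=
      sub_ne_zero.2 (by exact_mod_cast (one_lt_pow₀ hq n.succ_ne_zero).ne')
    have hfac : (qFactorial q n : ℂ) ≠ 0 := by exact_mod_cast (qFactorial_pos hq n).ne'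
    rw [qFactorial_succ]
    push_cast
    field_simp
    ring
  have hdiff : qExp q (q * z) - qExp q z = (q - 1) * z * qExp q z := by
    rw [qExp, qExp, ← (summable_qExp hq _).tsum_sub (summable_qExp hq z), hsum.tsum_eq_zero_add]
    simp only [hterm, pow_zero, sub_self, zero_add]
    exact (summable_qExp hq z).tsum_mul_left _
  linear_combination hdiff

lemma qExp_pow_mul (hq : 1 < q) (n : ℕ) (w : ℂ) :
    qExp q (q ^ n * w) = (∏ k ∈ Finset.range n, (1 + (q - 1) * q ^ k * w)) * qExp q w := by
  induction n with
  | zero => simp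
  | succ n ih =>
    rw [pow_succ', mul_assoc, qExp_mul_self hq, ih, Finset.prod_range_succ]
    ring

lemma exists_qExp_div_pow_ne_zero (hq : 1 < q) (z : ℂ) :
    ∃ n : ℕ, qExp q (z / q ^ n) ≠ 0 := by
  have hinv : ‖(q : ℂ)⁻¹‖ < 1 := by
    rw [norm_inv, Complex.norm_real, Real.norm_of_nonneg (by linarith)]
    exact inv_lt_one_of_one_lt₀ hq
  have hw : Tendsto (fun n : ℕ => z / q ^ n) atTop (𝓝 0) := by
    simpa [div_eq_mul_inv] using (tendsto_pow_atTop_nhds_zero_of_norm_lt_one hinv).const_mul z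
  have hlim : Tendsto (fun n : ℕ => qExp q (z / q ^ n)) atTop (𝓝 1) := by
    rw [← qExp_zero (q := q)]
    exact ((continuous_qExp hq).tendsto 0).comp hw
  exact (hlim.eventually_ne one_ne_zero).exists

theorem qExp_zeros (q : ℝ) (hq : 1 < q) (z : ℂ) :
    qExp q z = 0 ↔ ∃ m : ℕ, z = -((q : ℂ) ^ (m + 1)) / ((q : ℂ) - 1) := by
  have hq0 : (q : ℂ) ≠ 0 := by exact_mod_cast (zero_lt_one.trans hq).ne'
  have hq1 : (q : ℂ) - 1 ≠ 0 := sub_ne_zero.2 (by exact_mod_cast hq.ne')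
  constructor
  · intro hz
    obtain ⟨n, hn⟩ := exists_qExp_div_pow_ne_zero hq z
    have hzw : z = q ^ n * (z / q ^ n) := (mul_div_cancel₀ z (pow_ne_zero n hq0)).symm
    rw [hzw, qExp_pow_mul hq, mul_eq_zero, Finset.prod_eq_zero_iff] at hz
    obtain ⟨k, hk, hfactor⟩ := hz.resolve_right hn
    obtain ⟨m, rfl⟩ := Nat.exists_eq_add_of_lt (Finset.mem_range.1 hk)
    refine ⟨m, ?_⟩
    rw [hzw, eq_div_iff hq1]
    linear_combination (q : ℂ) ^ (m + 1) * hfactor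
  · rintro ⟨m, rfl⟩
    have hroot : (1 : ℂ) + (q - 1) * q ^ 0 * (-1 / (q - 1)) = 0 := by field_simp; ring
    rw [show -((q : ℂ) ^ (m + 1)) / (q - 1) = q ^ (m + 1) * (-1 / (q - 1)) by ring,
      qExp_pow_mul hq, Finset.prod_eq_zero (Finset.mem_range.2 m.succ_pos) hroot, zero_mul]
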